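/- (Gentle Measurement Lemma) Let ρ be a density matrix on ℂ^d, let E be a Hermitian d×d matrix with 0 ≤ E ≤ I (both E and I − E positive semidefinite), and let 0 ≤ ε < 1 be such that tr(Eρ) ≥ 1 − ε. Let √E denote the positive semidefinite square root of E, and define the post-measurement state ρ' = (√E ρ √E) / tr(Eρ). Then D(ρ, ρ') ≤ √ε. -/

import Mathlib

open scoped Matrix Kronecker BigOperators ComplexOrder

/-- The positive semidefinite square root of a positive semidefinite matrix
(the definition `Matrix.PosSemidef.sqrt` of the older Mathlib, removed since). -/
noncomputable def Matrix.PosSemidef.sqrt {n : Type*} [Fintype n] [DecidableEq n]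
    {𝕜 : Type*} [RCLike 𝕜] {A : Matrix n n 𝕜} (hA : A.PosSemidef) : Matrix n n 𝕜 :=
  (hA.1.eigenvectorUnitary : Matrix n n 𝕜) *
    Matrix.diagonal ((↑) ∘ Real.sqrt ∘ hA.1.eigenvalues) *
    (star hA.1.eigenvectorUnitary : Matrix n n 𝕜)

noncomputable def traceNorm {n : Type*} [Fintype n] [DecidableEq n]
    (A : Matrix n n ℂ) : ℝ :=
  ((Matrix.posSemidef_conjTranspose_mul_self A).sqrt.trace).re

noncomputable def traceDist {n : Type*} [Fintype n] [DecidableEq n]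
    (ρ σ : Matrix n n ℂ) : ℝ :=
  traceNorm (ρ - σ) / 2

def IsDensityMatrix {n : Type*} [Fintype n] (ρ : Matrix n n ℂ) : Prop :=
  ρ.PosSemidef ∧ ρ.trace = 1

/-!
Let `ρ'` be the post-measurement state and `P` the projection onto the nonnegative eigenspace of
`ρ - ρ'`, so that `D(ρ, ρ') = a - b` with `a = tr (P ρ)` and `b = tr (P ρ')`. Write
`r = tr (E ρ)`. Since `0 ≤ E ≤ 1` gives `E ≤ √E`, we have
`r ≤ |tr (P √E ρ)| + |tr ((1 - P) √E ρ)|`, and Cauchy–Schwarz for the trace bounds the two terms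
by `√a √(r b)` and `√(1 - a) √(r (1 - b))`. Hence `√r ≤ √(a b) + √((1 - a) (1 - b))`, and the
elementary inequality `(a - b)² + (√(a b) + √((1 - a) (1 - b)))² ≤ 1` yields
`D(ρ, ρ')² ≤ 1 - r ≤ ε`.
-/

open Matrix MatrixOrder

theorem sq_sub_add_sq_sqrt_mul_add_sqrt_mul_le_one {a a' b b' : ℝ} (ha : 0 ≤ a) (ha' : 0 ≤ a')
    (hb : 0 ≤ b) (hb' : 0 ≤ b') (haa' : a + a' = 1) (hbb' : b + b' = 1) :
    (a - b) ^ 2 + (√a * √b + √a' * √b') ^ 2 ≤ 1 := by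
  obtain ⟨x, hx, rfl⟩ : ∃ x, 0 ≤ x ∧ x ^ 2 = a := ⟨√a, Real.sqrt_nonneg a, Real.sq_sqrt ha⟩
  obtain ⟨x', hx', rfl⟩ : ∃ x, 0 ≤ x ∧ x ^ 2 = a' := ⟨√a', Real.sqrt_nonneg a', Real.sq_sqrt ha'⟩
  obtain ⟨u, hu, rfl⟩ : ∃ x, 0 ≤ x ∧ x ^ 2 = b := ⟨√b, Real.sqrt_nonneg b, Real.sq_sqrt hb⟩
  obtain ⟨u', hu', rfl⟩ : ∃ x, 0 ≤ x ∧ x ^ 2 = b' := ⟨√b', Real.sqrt_nonneg b', Real.sq_sqrt hb'⟩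
  simp only [Real.sqrt_sq, hx, hx', hu, hu']
  have lagrange : 1 - (x * u + x' * u') ^ 2 = (x * u' - x' * u) ^ 2 := by
    linear_combination (-(u ^ 2 + u' ^ 2)) * haa' - hbb'
  have hdiff : x ^ 2 - u ^ 2 = (x * u' - x' * u) * (x * u' + x' * u) := by
    linear_combination (-x ^ 2) * hbb' + u ^ 2 * haa'
  have hcross : (x * u' + x' * u) ^ 2 ≤ 1 := by
    nlinarith [sq_nonneg (x * u - x' * u')]
  calc (x ^ 2 - u ^ 2) ^ 2 + (x * u + x' * u') ^ 2
      = (x * u' - x' * u) ^ 2 * (x * u' + x' * u) ^ 2 + (x * u + x' * u') ^ 2 := by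
        rw [hdiff]; ring
    _ ≤ (x * u' - x' * u) ^ 2 + (x * u + x' * u') ^ 2 := by
        gcongr; exact mul_le_of_le_one_right (sq_nonneg _) hcross
    _ = 1 := by linarith

theorem sq_sub_le_one_sub_of_le_sqrt_mul_add_sqrt_mul {a a' b b' r : ℝ} (ha : 0 ≤ a) (ha' : 0 ≤ a')
    (hb : 0 ≤ b) (hb' : 0 ≤ b') (haa' : a + a' = 1) (hbb' : b + b' = 1) (hr : 0 ≤ r)
    (h : r ≤ √a * √(r * b) + √a' * √(r * b')) : (a - b) ^ 2 ≤ 1 - r := by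
  set X := √a * √b + √a' * √b'
  have hrX : √r * √r ≤ √r * X := by
    rw [Real.sqrt_mul hr, Real.sqrt_mul hr] at h
    rw [Real.mul_self_sqrt hr]
    linarith
  have : r ≤ X ^ 2 := by
    rw [← Real.mul_self_sqrt hr]
    nlinarith [Real.sqrt_nonneg r, show 0 ≤ X by positivity]
  linarith [sq_sub_add_sq_sqrt_mul_add_sqrt_mul_le_one ha ha' hb hb' haa' hbb']

section

variable {n 𝕜 : Type*} [Fintype n] [DecidableEq n] [RCLike 𝕜]

theorem Matrix.PosSemidef.sqrt_eq_cfcSqrt {A : Matrix n n 𝕜} (hA : A.PosSemidef) :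
    hA.sqrt = CFC.sqrt A := by
  rw [CFC.sqrt_eq_cfc, cfc_nnreal_eq_real _ A, hA.1.cfc_eq]
  simp [Matrix.PosSemidef.sqrt, IsHermitian.cfc, Function.comp_def, hA.eigenvalues_nonneg]

theorem Matrix.le_cfcSqrt_of_le_one {E : Matrix n n 𝕜} (h0 : 0 ≤ E) (h1 : E ≤ 1) :
    E ≤ CFC.sqrt E := by
  have hspec := (CFC.le_one_iff (R := ℝ) E).mp h1
  rw [CFC.sqrt_eq_real_sqrt E, cfcₙ_eq_cfc]
  conv_lhs => rw [← cfc_id' ℝ E]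
  refine cfc_mono fun x hx => Real.le_sqrt_of_sq_le ?_
  nlinarith [spectrum_nonneg_of_nonneg h0 hx, hspec x hx]

theorem Matrix.exists_mul_eq_posPart {A : Matrix n n 𝕜} (hA : A.IsHermitian) :
    ∃ P : Matrix n n 𝕜, 0 ≤ P ∧ P ≤ 1 ∧ P * A = A⁺ := by
  let χ : ℝ → ℝ := fun x => if 0 ≤ x then 1 else 0
  have hχ : ContinuousOn χ (spectrum ℝ A) := (Set.toFinite _).continuousOn χ
  refine ⟨cfc χ A, cfc_nonneg fun x _ => ?_, cfc_le_one _ _ fun x _ => ?_, ?_⟩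
  · unfold χ; split_ifs <;> norm_num
  · unfold χ; split_ifs <;> norm_num
  · nth_rw 2 [← cfc_id' ℝ A (ha := hA.isSelfAdjoint)]
    rw [← cfc_mul χ _ A, CFC.posPart_def, cfcₙ_eq_cfc]
    refine cfc_congr fun x _ => ?_
    unfold χ
    split_ifs with h
    · simp [posPart_eq_self.mpr h]
    · simp [posPart_eq_zero.mpr (le_of_not_ge h)]

theorem Matrix.trace_mul_nonneg {A B : Matrix n n 𝕜} (hA : 0 ≤ A) (hB : 0 ≤ B) :
    0 ≤ (A * B).trace := by
  have hs : (CFC.sqrt A)ᴴ = CFC.sqrt A := (CFC.sqrt_nonneg A).isSelfAdjoint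
  have := (nonneg_iff_posSemidef.mp hB).mul_mul_conjTranspose_same (CFC.sqrt A)
  rw [hs] at this
  simpa only [trace_mul_cycle, CFC.sqrt_mul_sqrt_self A hA] using this.trace_nonneg

/-- Cauchy–Schwarz for the semi-inner product `⟪X, Y⟫ = tr (Y ρ Xᴴ)`, applied to `√A` and `√A B`. -/
theorem Matrix.norm_trace_mul_mul_le {A ρ : Matrix n n 𝕜} (hA : 0 ≤ A) (hρ : 0 ≤ ρ)
    (B : Matrix n n 𝕜) :
    ‖(A * B * ρ).trace‖ ≤
      √(RCLike.re (A * ρ).trace) * √(RCLike.re (A * (B * ρ * Bᴴ)).trace) := by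
  let _ := ρ.toMatrixSeminormedAddCommGroup (nonneg_iff_posSemidef.mp hρ)
  let _ := ρ.toMatrixInnerProductSpace (nonneg_iff_posSemidef.mp hρ)
  set a := CFC.sqrt A
  have ha : aᴴ = a := (CFC.sqrt_nonneg A).isSelfAdjoint
  have key := norm_inner_le_norm (𝕜 := 𝕜) a (a * B)
  rw [norm_eq_sqrt_re_inner (𝕜 := 𝕜) a, norm_eq_sqrt_re_inner (𝕜 := 𝕜) (a * B)] at key
  change ‖(a * B * ρ * aᴴ).trace‖ ≤ √(RCLike.re (a * ρ * aᴴ).trace) *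
    √(RCLike.re (a * B * ρ * (a * B)ᴴ).trace) at key
  have cyc (X : Matrix n n 𝕜) : (a * X * a).trace = (A * X).trace := by
    rw [trace_mul_comm, ← mul_assoc, CFC.sqrt_mul_sqrt_self A hA]
  rw [mul_assoc A, ← cyc, ← cyc, ← cyc]
  simpa only [conjTranspose_mul, ha, mul_assoc] using key

theorem Matrix.re_trace_mul_le_sqrt_mul_sqrt_add_sqrt_mul_sqrt {ρ E P Q : Matrix n n 𝕜}
    (hρ : 0 ≤ ρ) (hE0 : 0 ≤ E) (hE1 : E ≤ 1) (hP : 0 ≤ P) (hQ : 0 ≤ Q) (hPQ : P + Q = 1) :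
    RCLike.re (E * ρ).trace ≤
      √(RCLike.re (P * ρ).trace) *
          √(RCLike.re (P * (CFC.sqrt E * ρ * CFC.sqrt E)).trace) +
        √(RCLike.re (Q * ρ).trace) *
          √(RCLike.re (Q * (CFC.sqrt E * ρ * CFC.sqrt E)).trace) := by
  set s := CFC.sqrt E
  have hs : sᴴ = s := (CFC.sqrt_nonneg E).isSelfAdjoint
  have hEs : 0 ≤ RCLike.re ((s - E) * ρ).trace :=
    RCLike.nonneg_iff.mp (trace_mul_nonneg (sub_nonneg.mpr (le_cfcSqrt_of_le_one hE0 hE1)) hρ) |>.1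
  calc RCLike.re (E * ρ).trace
      ≤ RCLike.re (s * ρ).trace := by simpa [sub_mul, trace_sub] using hEs
    _ ≤ ‖(s * ρ).trace‖ := RCLike.re_le_norm _
    _ = ‖(P * s * ρ).trace + (Q * s * ρ).trace‖ := by
        rw [← trace_add, ← add_mul, ← add_mul, hPQ, one_mul]
    _ ≤ ‖(P * s * ρ).trace‖ + ‖(Q * s * ρ).trace‖ := norm_add_le _ _
    _ ≤ _ := by
        have hP' := norm_trace_mul_mul_le hP hρ s
        have hQ' := norm_trace_mul_mul_le hQ hρ s
        rw [hs] at hP' hQ'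
        exact add_le_add hP' hQ'

end

theorem traceNorm_eq_two_mul_re_trace_posPart {n : Type*} [Fintype n] [DecidableEq n]
    {A : Matrix n n ℂ} (hA : A.IsHermitian) (h0 : A.trace = 0) :
    traceNorm A = 2 * (A⁺).trace.re := by
  have := congr(($(CFC.abs_add_self A hA.isSelfAdjoint)).trace.re)
  rw [trace_add, h0, add_zero] at this
  rw [traceNorm, PosSemidef.sqrt_eq_cfcSqrt, ← star_eq_conjTranspose, ← CFC.abs, this, trace_smul,
    nsmul_eq_mul]
  simp

theorem isDensityMatrix_inv_trace_smul {n : Type*} [Fintype n] {A : Matrix n n ℂ}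
    (hA : A.PosSemidef) (h : A.trace ≠ 0) : IsDensityMatrix (A.trace⁻¹ • A) :=
  ⟨hA.smul (inv_nonneg.mpr hA.trace_nonneg), by rw [trace_smul, smul_eq_mul, inv_mul_cancel₀ h]⟩

section

variable {n : Type*} [Fintype n] [DecidableEq n] {ρ ρ' : Matrix n n ℂ}

theorem IsDensityMatrix.exists_traceDist_eq_re_trace_sub (hρ : IsDensityMatrix ρ)
    (hρ' : IsDensityMatrix ρ') :
    ∃ P : Matrix n n ℂ, 0 ≤ P ∧ P ≤ 1 ∧
      traceDist ρ ρ' = (P * ρ).trace.re - (P * ρ').trace.re := by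
  have hΔ : (ρ - ρ').IsHermitian := hρ.1.1.sub hρ'.1.1
  obtain ⟨P, hP0, hP1, hPΔ⟩ := exists_mul_eq_posPart hΔ
  refine ⟨P, hP0, hP1, ?_⟩
  have h0 : (ρ - ρ').trace = 0 := by rw [trace_sub, hρ.2, hρ'.2, sub_self]
  rw [traceDist, traceNorm_eq_two_mul_re_trace_posPart hΔ h0, ← hPΔ, mul_sub, trace_sub,
    Complex.sub_re]
  ring

theorem isDensityMatrix_postMeasurement {E : Matrix n n ℂ} (hρ : ρ.PosSemidef) (hE : 0 ≤ E)
    (h : (E * ρ).trace ≠ 0) :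
    IsDensityMatrix ((E * ρ).trace⁻¹ • (CFC.sqrt E * ρ * CFC.sqrt E)) := by
  have hs : (CFC.sqrt E)ᴴ = CFC.sqrt E := (CFC.sqrt_nonneg E).isSelfAdjoint
  have htr : (CFC.sqrt E * ρ * CFC.sqrt E).trace = (E * ρ).trace := by
    rw [trace_mul_cycle, CFC.sqrt_mul_sqrt_self E hE]
  have hσ : (CFC.sqrt E * ρ * CFC.sqrt E).PosSemidef := by
    simpa only [hs] using hρ.mul_mul_conjTranspose_same (CFC.sqrt E)
  rw [← htr] at h ⊢
  exact isDensityMatrix_inv_trace_smul hσ h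

theorem IsDensityMatrix.sq_re_trace_mul_sub_le_one_sub {E P : Matrix n n ℂ} {r : ℝ}
    (hρ : IsDensityMatrix ρ) (hρ' : IsDensityMatrix ρ') (hE0 : 0 ≤ E) (hE1 : E ≤ 1)
    (hP0 : 0 ≤ P) (hP1 : P ≤ 1) (hr : 0 ≤ r)
    (hσ : CFC.sqrt E * ρ * CFC.sqrt E = (r : ℂ) • ρ') :
    ((P * ρ).trace.re - (P * ρ').trace.re) ^ 2 ≤ 1 - r := by
  have hρ0 : 0 ≤ ρ := nonneg_iff_posSemidef.mpr hρ.1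
  have hρ'0 : 0 ≤ ρ' := nonneg_iff_posSemidef.mpr hρ'.1
  have hQ0 : 0 ≤ 1 - P := sub_nonneg.mpr hP1
  have hEρ : (E * ρ).trace.re = r := by
    rw [← CFC.sqrt_mul_sqrt_self E hE0, ← trace_mul_cycle, hσ, trace_smul, hρ'.2]
    simp
  have key := re_trace_mul_le_sqrt_mul_sqrt_add_sqrt_mul_sqrt hρ0 hE0 hE1 hP0 hQ0
    (add_sub_cancel P 1)
  simp only [hσ, Matrix.mul_smul, trace_smul, smul_eq_mul, RCLike.re_to_complex,
    Complex.re_ofReal_mul, hEρ] at key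
  have re_nonneg {X Y : Matrix n n ℂ} (hX : 0 ≤ X) (hY : 0 ≤ Y) : 0 ≤ (X * Y).trace.re :=
    (Complex.nonneg_iff.mp (trace_mul_nonneg hX hY)).1
  have re_add {Y : Matrix n n ℂ} (hY : Y.trace = 1) :
      (P * Y).trace.re + ((1 - P) * Y).trace.re = 1 := by
    rw [← Complex.add_re, ← trace_add, ← add_mul, add_sub_cancel, one_mul, hY, Complex.one_re]
  exact sq_sub_le_one_sub_of_le_sqrt_mul_add_sqrt_mul (re_nonneg hP0 hρ0) (re_nonneg hQ0 hρ0)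
    (re_nonneg hP0 hρ'0) (re_nonneg hQ0 hρ'0) (re_add hρ.2) (re_add hρ'.2) hr key

end

theorem gentle_measurement_general
    {d : ℕ} (ρ E : Matrix (Fin d) (Fin d) ℂ)
    (hρ : IsDensityMatrix ρ) (hE : E.PosSemidef)
    (hE1 : ((1 : Matrix (Fin d) (Fin d) ℂ) - E).PosSemidef)
    (ε : ℝ) (hε1 : ε < 1)
    (htr : 1 - ε ≤ ((E * ρ).trace).re) :
    traceDist ρ (((E * ρ).trace)⁻¹ • (hE.sqrt * ρ * hE.sqrt)) ≤ Real.sqrt ε := by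
  have hE0 : 0 ≤ E := nonneg_iff_posSemidef.mpr hE
  set r := ((E * ρ).trace).re
  have hr : 0 < r := by linarith
  have hp : (E * ρ).trace = r :=
    Complex.eq_re_of_ofReal_le (trace_mul_nonneg hE0 (nonneg_iff_posSemidef.mpr hρ.1))
  have hp0 : (E * ρ).trace ≠ 0 := by rw [hp]; exact_mod_cast hr.ne'
  rw [hE.sqrt_eq_cfcSqrt]
  set ρ' := (E * ρ).trace⁻¹ • (CFC.sqrt E * ρ * CFC.sqrt E)
  have hρ' : IsDensityMatrix ρ' := isDensityMatrix_postMeasurement hρ.1 hE0 hp0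
  have hσ : CFC.sqrt E * ρ * CFC.sqrt E = (r : ℂ) • ρ' := by
    rw [smul_smul, ← hp, mul_inv_cancel₀ hp0, one_smul]
  obtain ⟨P, hP0, hP1, hD⟩ := hρ.exists_traceDist_eq_re_trace_sub hρ'
  rw [hD]
  exact Real.le_sqrt_of_sq_le <|
    (hρ.sq_re_trace_mul_sub_le_one_sub hρ' hE0 (le_iff.mpr hE1) hP0 hP1 hr.le hσ).trans
      (by linarith)

/-- Gentle Measurement Lemma: if a measurement element `E` detects the
state `ρ` with probability at least `1 - ε`, then the post-measurement state
`√E ρ √E / tr(Eρ)` is `√ε`-close to `ρ` in trace distance. -/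
theorem gentle_measurement
    {d : ℕ} (ρ E : Matrix (Fin d) (Fin d) ℂ)
    (hρ : IsDensityMatrix ρ) (hEH : E.IsHermitian) (hE : E.PosSemidef)
    (hE1 : ((1 : Matrix (Fin d) (Fin d) ℂ) - E).PosSemidef)
    (ε : ℝ) (hε0 : 0 ≤ ε) (hε1 : ε < 1)
    (htr : 1 - ε ≤ ((E * ρ).trace).re) :
    traceDist ρ (((E * ρ).trace)⁻¹ • (hE.sqrt * ρ * hE.sqrt)) ≤ Real.sqrt ε :=
  gentle_measurement_general ρ E hρ hE hE1 ε hε1 htr
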